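/- Let λ be a nonzero real number and let a_k(N;λ) be the recursively defined coefficients. Then for all integers N ≥ 2 and 1 ≤ j ≤ N−1 one has the explicit multiple-sum formula a_j(N;λ) = (−1)^j · j! · λ^j · Σ_{i_j=0}^{N−j} Σ_{i_{j−1}=0}^{N−j−i_j} ··· Σ_{i_1=0}^{N−j−i_j−···−i_2} (N+(j+1)λ−1)_{i_j} · (N+jλ−i_j−2)_{i_{j−1}} ··· (N+2λ−i_j−···−i_2−j)_{i_1} · (N+λ−i_j−···−i_1−j−1)_{N−i_j−···−i_1−j−1}, where (x)_n denotes the falling factorial, the m-th factor from the left (for 1 ≤ m ≤ j) is (N+(j+2−m)λ−i_j−···−i_{j−m+2}−(m−1))_{i_{j−m+1}}, and summands in which the last index N−i_j−···−i_1−j−1 equals −1 are interpreted via a_0(0;λ) = 1/λ (the last falling-factorial factor is replaced by 1/λ). -/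

import Mathlib

/-!
Write `S(N, j)` for the multiple sum, so that the claim reads `a_j(N) = (-1)^j j! λ^j S(N, j)`.
Splitting off the outermost summation index `i_j = v₀` gives
`S(N, j + 1) = Σ_{v₀ < N - j} (N + (j + 2)λ - 1)_{v₀} S(N - 1 - v₀, j)`,
and since `(x)_{v + 1} = x (x - 1)_v`, the terms `v₀ ≥ 1` of this expansion of `S(N + 1, j + 1)`
reassemble to `(N + (j + 2)λ) S(N, j + 1)`, while the term `v₀ = 0` is `S(N, j)`.
Together with `S(N, N) = 1/λ` and `S(N, 0) = (N + λ - 1)_{N - 1}`, this shows that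
`(-1)^j j! λ^j S(N, j)` satisfies the recursion defining `a_j(N)` with the same initial values,
so the two agree for all `0 ≤ j ≤ N` by induction on `N`.
-/

open Finset

lemma Fin.sum_Iio_succ {M : Type*} [AddCommMonoid M] {n : ℕ} (f : Fin (n + 1) → M) (m : Fin n) :
    ∑ i ∈ Iio m.succ, f i = f 0 + ∑ i ∈ Iio m, f i.succ := by
  rw [← Ico_bot, bot_eq_zero, ← Ioo_insert_left (Fin.succ_pos m), sum_insert (by simp),
    ← Fin.map_succEmb_Iio, sum_map]
  rfl

lemma descPochhammer_eval_succ_left (R : Type*) [CommRing R] (n : ℕ) (x : R) :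
    (descPochhammer R (n + 1)).eval x = x * (descPochhammer R n).eval (x - 1) := by
  simp [descPochhammer_succ_left]

def booleIndex (N j : ℕ) : Finset (Fin j → ℕ) :=
  (Fintype.piFinset fun _ : Fin j => range (N - j + 1)).filter fun v => ∑ m, v m ≤ N - j

noncomputable def booleTerm (lam : ℝ) (N j : ℕ) (v : Fin j → ℕ) : ℝ :=
  (∏ m : Fin j,
    (descPochhammer ℝ (v m)).eval
      ((N : ℝ) + ((j : ℝ) + 1 - ((m : ℕ) : ℝ)) * lam
        - (∑ m' ∈ Iio m, ((v m' : ℕ) : ℝ)) - (((m : ℕ) : ℝ) + 1))) *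
  (if (∑ m, v m) = N - j then 1 / lam
   else (descPochhammer ℝ (N - j - (∑ m, v m) - 1)).eval
          ((N : ℝ) + lam - (((∑ m, v m : ℕ)) : ℝ) - (j : ℝ) - 1))

noncomputable def booleSum (lam : ℝ) (N j : ℕ) : ℝ :=
  ∑ v ∈ booleIndex N j, booleTerm lam N j v

noncomputable def booleCoeff (lam : ℝ) (N j : ℕ) : ℝ :=
  (-1) ^ j * j.factorial * lam ^ j * booleSum lam N j

lemma mem_booleIndex {N j : ℕ} {v : Fin j → ℕ} : v ∈ booleIndex N j ↔ ∑ m, v m ≤ N - j := by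
  simp only [booleIndex, mem_filter, Fintype.mem_piFinset, mem_range, and_iff_right_iff_imp]
  intro h m
  have := single_le_sum (fun i _ => Nat.zero_le (v i)) (mem_univ m)
  omega

lemma booleIndex_self (N : ℕ) : booleIndex N N = {0} := by
  ext v
  simp [mem_booleIndex, funext_iff]

lemma booleIndex_zero_right (N : ℕ) : booleIndex N 0 = {0} := by
  ext v
  simp [mem_booleIndex, Subsingleton.elim v 0]

lemma sum_booleIndex_succ {M : Type*} [AddCommMonoid M] {N j : ℕ} (h : j + 1 ≤ N)
    (f : (Fin (j + 1) → ℕ) → M) :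
    ∑ v ∈ booleIndex N (j + 1), f v
      = ∑ v₀ ∈ range (N - j), ∑ w ∈ booleIndex (N - 1 - v₀) j, f (Fin.cons v₀ w) := by
  rw [sum_sigma']
  refine sum_nbij' (fun v => ⟨v 0, Fin.tail v⟩) (fun p => Fin.cons p.1 p.2) ?_ ?_ ?_ ?_ ?_
  · intro v hv
    simp only [mem_booleIndex, Fin.sum_univ_succ] at hv
    simp only [mem_sigma, mem_range, mem_booleIndex, Fin.tail]
    omega
  · rintro ⟨v₀, w⟩ hp
    simp only [mem_sigma, mem_range, mem_booleIndex] at hp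
    simp only [mem_booleIndex, Fin.sum_univ_succ, Fin.cons_zero, Fin.cons_succ]
    omega
  · intro v _
    exact Fin.cons_self_tail v
  · rintro ⟨v₀, w⟩ _
    simp
  · intro v _
    simp

lemma booleTerm_cons (lam : ℝ) {N j v₀ : ℕ} (h : v₀ + j < N) (w : Fin j → ℕ) :
    booleTerm lam N (j + 1) (Fin.cons v₀ w)
      = (descPochhammer ℝ v₀).eval ((N : ℝ) + ((j : ℝ) + 2) * lam - 1)
        * booleTerm lam (N - 1 - v₀) j w := by
  have hcast : ((N - 1 - v₀ : ℕ) : ℝ) = N - 1 - v₀ := by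
    rw [Nat.cast_sub (by omega), Nat.cast_sub (by omega), Nat.cast_one]
  have hsum : ∑ m, (Fin.cons v₀ w : Fin (j + 1) → ℕ) m = v₀ + ∑ m, w m := Fin.sum_univ_succ _
  have hfactors : ∀ m : Fin j,
      (N : ℝ) + (((j + 1 : ℕ) : ℝ) + 1 - ((m.succ : ℕ) : ℝ)) * lam
          - (∑ m' ∈ Iio m.succ, (((Fin.cons v₀ w : Fin (j + 1) → ℕ) m' : ℕ) : ℝ))
          - (((m.succ : ℕ) : ℝ) + 1)
        = ((N - 1 - v₀ : ℕ) : ℝ) + ((j : ℝ) + 1 - ((m : ℕ) : ℝ)) * lam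
          - (∑ m' ∈ Iio m, ((w m' : ℕ) : ℝ)) - (((m : ℕ) : ℝ) + 1) := by
    intro m
    rw [Fin.sum_Iio_succ, hcast]
    simp only [Fin.cons_zero, Fin.cons_succ, Fin.val_succ]
    push_cast
    ring
  have hlast : (if v₀ + ∑ m, w m = N - (j + 1) then 1 / lam
      else (descPochhammer ℝ (N - (j + 1) - (v₀ + ∑ m, w m) - 1)).eval
        ((N : ℝ) + lam - ((v₀ + ∑ m, w m : ℕ) : ℝ) - ((j + 1 : ℕ) : ℝ) - 1))
      = (if ∑ m, w m = N - 1 - v₀ - j then 1 / lam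
      else (descPochhammer ℝ (N - 1 - v₀ - j - ∑ m, w m - 1)).eval
        (((N - 1 - v₀ : ℕ) : ℝ) + lam - ((∑ m, w m : ℕ) : ℝ) - (j : ℝ) - 1)) := by
    refine if_congr (by omega) rfl ?_
    rw [show N - (j + 1) - (v₀ + ∑ m, w m) - 1 = N - 1 - v₀ - j - ∑ m, w m - 1 by omega, hcast]
    push_cast
    congr 1
    ring
  rw [booleTerm, booleTerm, Fin.prod_univ_succ, hsum, hlast, mul_assoc]
  simp only [Fin.cons_succ, hfactors]
  congr 2
  rw [← bot_eq_zero, Iio_bot, sum_empty, bot_eq_zero, Fin.val_zero]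
  push_cast
  ring

lemma booleSum_succ_right (lam : ℝ) {N j : ℕ} (h : j + 1 ≤ N) :
    booleSum lam N (j + 1) = ∑ v₀ ∈ range (N - j),
      (descPochhammer ℝ v₀).eval ((N : ℝ) + ((j : ℝ) + 2) * lam - 1) * booleSum lam (N - 1 - v₀) j := by
  rw [booleSum, sum_booleIndex_succ h]
  refine sum_congr rfl fun v₀ hv₀ => ?_
  rw [booleSum, mul_sum]
  exact sum_congr rfl fun w _ => booleTerm_cons lam (by rw [mem_range] at hv₀; omega) w

lemma booleSum_self (lam : ℝ) (N : ℕ) : booleSum lam N N = 1 / lam := by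
  simp [booleSum, booleIndex_self, booleTerm]

lemma booleSum_zero_right (lam : ℝ) {N : ℕ} (hN : N ≠ 0) :
    booleSum lam N 0 = (descPochhammer ℝ (N - 1)).eval ((N : ℝ) + lam - 1) := by
  simp [booleSum, booleIndex_zero_right, booleTerm, Ne.symm hN]

lemma booleSum_succ_zero (lam : ℝ) {N : ℕ} (hN : N ≠ 0) :
    booleSum lam (N + 1) 0 = ((N : ℝ) + lam) * booleSum lam N 0 := by
  obtain ⟨n, rfl⟩ := Nat.exists_eq_add_one_of_ne_zero hN
  rw [booleSum_zero_right lam hN, booleSum_zero_right lam (by omega), Nat.add_sub_cancel,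
    Nat.add_sub_cancel, descPochhammer_eval_succ_left]
  push_cast
  rw [show (n : ℝ) + 1 + 1 + lam - 1 - 1 = n + 1 + lam - 1 by ring]
  ring

lemma booleSum_succ_succ (lam : ℝ) {N j : ℕ} (h : j + 1 ≤ N) :
    booleSum lam (N + 1) (j + 1)
      = booleSum lam N j + ((N : ℝ) + ((j : ℝ) + 2) * lam) * booleSum lam N (j + 1) := by
  rw [booleSum_succ_right lam (by omega), show N + 1 - j = N - j + 1 by omega, sum_range_succ',
    booleSum_succ_right lam h, mul_sum]
  simp only [descPochhammer_eval_succ_left, descPochhammer_zero, Polynomial.eval_one, one_mul,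
    Nat.add_sub_cancel, Nat.sub_zero, Nat.cast_add, Nat.cast_one]
  rw [add_comm]
  congr 1
  refine sum_congr rfl fun i _ => ?_
  rw [show N - (i + 1) = N - 1 - i by omega,
    show (N : ℝ) + 1 + (j + 2) * lam - 1 - 1 = N + (j + 2) * lam - 1 by ring]
  ring

lemma booleCoeff_zero_zero (lam : ℝ) : booleCoeff lam 0 0 = 1 / lam := by
  simp [booleCoeff, booleSum_self]

lemma booleCoeff_one_zero (lam : ℝ) : booleCoeff lam 1 0 = 1 := by
  simp [booleCoeff, booleSum_zero_right]

lemma booleCoeff_succ_self (lam : ℝ) (N : ℕ) :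
    booleCoeff lam (N + 1) (N + 1) = -(((N : ℝ) + 1) * lam) * booleCoeff lam N N := by
  simp only [booleCoeff, booleSum_self, Nat.factorial_succ]
  push_cast
  ring

lemma booleCoeff_succ_zero (lam : ℝ) {N : ℕ} (hN : N ≠ 0) :
    booleCoeff lam (N + 1) 0 = ((N : ℝ) + lam) * booleCoeff lam N 0 := by
  simp [booleCoeff, booleSum_succ_zero lam hN]

lemma booleCoeff_succ_succ (lam : ℝ) {N j : ℕ} (h : j + 1 ≤ N) :
    booleCoeff lam (N + 1) (j + 1) = -(((j : ℝ) + 1) * lam) * booleCoeff lam N j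
      + ((N : ℝ) + ((j : ℝ) + 2) * lam) * booleCoeff lam N (j + 1) := by
  simp only [booleCoeff, booleSum_succ_succ lam h, Nat.factorial_succ]
  push_cast
  ring

theorem boole_coeff_aj_closed_form_general (lam : ℝ) (hlam : lam ≠ 0)
    (a : ℕ → ℕ → ℝ)
    (ha00 : a 0 0 = 1 / lam) (ha01 : a 0 1 = 1) (ha11 : a 1 1 = -1)
    (haTop : ∀ N : ℕ, 1 ≤ N → a 0 (N + 1) = ((N : ℝ) + lam) * a 0 N)
    (haBot : ∀ N : ℕ, 1 ≤ N →
      a (N + 1) (N + 1) = -(((N : ℝ) + 1) * lam) * a N N)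
    (haMid : ∀ N : ℕ, 1 ≤ N → ∀ i : ℕ, 2 ≤ i → i ≤ N + 1 →
      a (i - 1) (N + 1) =
        -(((i : ℝ) - 1) * lam) * a (i - 2) N + ((N : ℝ) + (i : ℝ) * lam) * a (i - 1) N)
    (N j : ℕ) (hjN : j ≤ N - 1) :
    a j N =
      (-1 : ℝ) ^ j * (j.factorial : ℝ) * lam ^ j *
        ∑ v ∈ (Fintype.piFinset fun _ : Fin j => Finset.range (N - j + 1)).filter
            (fun v => ∑ m, v m ≤ N - j),
          (∏ m : Fin j,
            (descPochhammer ℝ (v m)).eval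
              ((N : ℝ) + ((j : ℝ) + 1 - ((m : ℕ) : ℝ)) * lam
                - (∑ m' ∈ Finset.Iio m, ((v m' : ℕ) : ℝ)) - (((m : ℕ) : ℝ) + 1))) *
          (if (∑ m, v m) = N - j then 1 / lam
           else (descPochhammer ℝ (N - j - (∑ m, v m) - 1)).eval
                  ((N : ℝ) + lam - (((∑ m, v m : ℕ)) : ℝ) - (j : ℝ) - 1)) := by
  suffices h : ∀ N, ∀ j ≤ N, a j N = booleCoeff lam N j from h N j (by omega)
  intro N
  induction N with
  | zero =>
    intro j hj
    obtain rfl : j = 0 := by omega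
    rw [ha00, booleCoeff_zero_zero]
  | succ N ih =>
    intro j hj
    rcases Nat.eq_zero_or_pos N with rfl | hN
    · interval_cases j
      · rw [ha01, booleCoeff_one_zero]
      · rw [ha11, booleCoeff_succ_self, ← ih 0 le_rfl, ha00]
        field_simp
        norm_num
    rcases j with _ | j
    · rw [haTop N hN, ih 0 (Nat.zero_le N), booleCoeff_succ_zero lam hN.ne']
    rcases Nat.lt_or_eq_of_le hj with hlt | heq
    · have hmid := haMid N hN (j + 2) (by omega) (by omega)
      simp only [Nat.add_sub_cancel, Nat.add_succ_sub_one] at hmid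
      rw [hmid, ih j (by omega), ih (j + 1) (by omega), booleCoeff_succ_succ lam (by omega)]
      push_cast
      ring
    · obtain rfl : N = j := by omega
      rw [haBot N hN, ih N le_rfl, booleCoeff_succ_self]

/-- For `λ ≠ 0` and the recursively defined coefficients
`a_k(N;λ)`, for all `N ≥ 2` and `1 ≤ j ≤ N-1` one has the explicit
multiple-sum formula
`a_j(N;λ) = (-1)^j · j! · λ^j · Σ_{i_j=0}^{N-j} Σ_{i_{j-1}=0}^{N-j-i_j} ⋯
  Σ_{i_1=0}^{N-j-i_j-⋯-i_2} (N+(j+1)λ-1)_{i_j} (N+jλ-i_j-2)_{i_{j-1}} ⋯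
  (N+2λ-i_j-⋯-i_2-j)_{i_1} · (N+λ-i_j-⋯-i_1-j-1)_{N-i_j-⋯-i_1-j-1}`.
Here the sum is encoded as the sum over all tuples `v : Fin j → ℕ`
(`v 0 = i_j, v 1 = i_{j-1}, …, v (j-1) = i_1`) with `Σ v ≤ N-j`; the `m`-th
factor from the left (`m : Fin j` zero-based) is
`(N+(j+1-m)λ - v 0 - ⋯ - v (m-1) - (m+1))_{v m}`, and summands whose last
index `N - Σv - j - 1` equals `-1` (i.e. `Σ v = N-j`) have the last
falling-factorial factor replaced by `a_0(0;λ) = 1/λ`.  The falling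
factorial `(x)_n` is `descPochhammer`. -/
theorem boole_coeff_aj_closed_form (lam : ℝ) (hlam : lam ≠ 0)
    (a : ℕ → ℕ → ℝ)
    (ha00 : a 0 0 = 1 / lam) (ha01 : a 0 1 = 1) (ha11 : a 1 1 = -1)
    (haTop : ∀ N : ℕ, 1 ≤ N → a 0 (N + 1) = ((N : ℝ) + lam) * a 0 N)
    (haBot : ∀ N : ℕ, 1 ≤ N →
      a (N + 1) (N + 1) = -(((N : ℝ) + 1) * lam) * a N N)
    (haMid : ∀ N : ℕ, 1 ≤ N → ∀ i : ℕ, 2 ≤ i → i ≤ N + 1 →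
      a (i - 1) (N + 1) =
        -(((i : ℝ) - 1) * lam) * a (i - 2) N + ((N : ℝ) + (i : ℝ) * lam) * a (i - 1) N)
    (N j : ℕ) (hN : 2 ≤ N) (hj1 : 1 ≤ j) (hjN : j ≤ N - 1) :
    a j N =
      (-1 : ℝ) ^ j * (j.factorial : ℝ) * lam ^ j *
        ∑ v ∈ (Fintype.piFinset fun _ : Fin j => Finset.range (N - j + 1)).filter
            (fun v => ∑ m, v m ≤ N - j),
          (∏ m : Fin j,
            (descPochhammer ℝ (v m)).eval
              ((N : ℝ) + ((j : ℝ) + 1 - ((m : ℕ) : ℝ)) * lam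
                - (∑ m' ∈ Finset.Iio m, ((v m' : ℕ) : ℝ)) - (((m : ℕ) : ℝ) + 1))) *
          (if (∑ m, v m) = N - j then 1 / lam
           else (descPochhammer ℝ (N - j - (∑ m, v m) - 1)).eval
                  ((N : ℝ) + lam - (((∑ m, v m : ℕ)) : ℝ) - (j : ℝ) - 1)) :=
  boole_coeff_aj_closed_form_general lam hlam a ha00 ha01 ha11 haTop haBot haMid N j hjN
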